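/- arXiv:1503.00199 — 2 statements merged into one kernel-verified Lean document; each statement's English description precedes it below -/
import Mathlib

section
/- For every odd prime p, ord_p(F̄_{3p−1}) = −(p−1)/2, where F̄_n is the reciprocal Farey product of order n. -/
open Finset

/-- The Farey product: product of all reduced fractions h/k with 1 ≤ h ≤ k ≤ n, gcd(h,k)=1. -/
def fareyProd (n : ℕ) : ℚ :=
  ∏ k ∈ Finset.Icc 1 n, ∏ h ∈ (Finset.Icc 1 k).filter (fun h => Nat.gcd h k = 1), (h : ℚ) / k

/-- The reciprocal Farey product F̄_n. -/
def recipFareyProd (n : ℕ) : ℚ := (fareyProd n)⁻¹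

lemma padicValRat_prod {p : ℕ} [Fact p.Prime] {α : Type*} (s : Finset α) (f : α → ℚ)
    (h : ∀ i ∈ s, f i ≠ 0) :
    padicValRat p (∏ i ∈ s, f i) = ∑ i ∈ s, padicValRat p (f i) := by
  induction s using Finset.cons_induction with
  | empty => simp
  | cons a s ha ih =>
    rw [Finset.prod_cons, Finset.sum_cons,
      padicValRat.mul (h a (Finset.mem_cons_self a s))
        (Finset.prod_ne_zero_iff.2 fun i hi => h i (Finset.mem_cons_of_mem hi)),
      ih (fun i hi => h i (Finset.mem_cons_of_mem hi))]

lemma cardF_eq_totient (k : ℕ) (hk : 2 ≤ k) :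
    ((Finset.Icc 1 k).filter (fun h => Nat.gcd h k = 1)).card = k.totient := by
  rw [Nat.totient]
  congr 1
  ext h
  simp only [Finset.mem_filter, Finset.mem_Icc, Finset.mem_range, Nat.Coprime]
  rw [Nat.gcd_comm]
  constructor
  · rintro ⟨⟨h1, h2⟩, hg⟩
    refine ⟨lt_of_le_of_ne h2 ?_, hg⟩
    rintro rfl
    rw [Nat.gcd_self] at hg
    omega
  · rintro ⟨h1, hg⟩
    refine ⟨⟨?_, le_of_lt h1⟩, hg⟩
    rcases Nat.eq_zero_or_pos h with rfl | h0
    · rw [Nat.gcd_zero_right] at hg; omega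
    · exact h0

theorem ord_recipFareyProd_at_three_p_sub_one (p : ℕ) (hp : p.Prime) (hodd : Odd p) :
    padicValRat p (recipFareyProd (3 * p - 1)) = -(((p : ℤ) - 1) / 2) := by
  haveI : Fact p.Prime := ⟨hp⟩
  obtain ⟨m, hm⟩ := hodd
  have hp2 : p ≠ 2 := by rintro rfl; omega
  have hp3 : 3 ≤ p := by have := hp.two_le; omega
  set n := 3 * p - 1 with hn
  -- divisibility helpers
  have hmult : ∀ h, 1 ≤ h → h ≤ n → p ∣ h → h = p ∨ h = 2 * p := by
    rintro h h1 h2 ⟨c, rfl⟩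
    have hc1 : 1 ≤ c := by
      rcases Nat.eq_zero_or_pos c with rfl | h0
      · omega
      · exact h0
    have hc2 : c < 3 := by
      by_contra hc
      push_neg at hc
      have : p * 3 ≤ p * c := Nat.mul_le_mul_left p hc
      omega
    interval_cases c <;> omega
  -- valuation of naturals in range
  have hv : ∀ h, 1 ≤ h → h ≤ n → (padicValNat p h : ℤ) =
      (if h = p then 1 else 0) + (if h = 2 * p then 1 else 0) := by
    intro h h1 h2
    by_cases hd : p ∣ h
    · rcases hmult h h1 h2 hd with he | he
      · subst he
        rw [padicValNat.self hp.one_lt]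
        have hne' : h ≠ 2 * h := by omega
        simp [hne']
      · subst he
        have h2p : 2 * p ≠ p := by omega
        have hnd2 : ¬ p ∣ 2 := fun hdd => absurd (Nat.le_of_dvd (by norm_num) hdd) (by omega)
        rw [padicValNat.mul (p := p) (by norm_num) (by omega),
          padicValNat.eq_zero_of_not_dvd hnd2,
          padicValNat.self hp.one_lt]
        simp [h2p]
    · rw [padicValNat.eq_zero_of_not_dvd hd]
      have e1 : h ≠ p := by rintro rfl; exact hd dvd_rfl
      have e2 : h ≠ 2 * p := by rintro rfl; exact hd ⟨2, by ring⟩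
      simp [e1, e2]
  -- no odd multiple of p in [2p, 3p-1]
  have hnd : ∀ k, 2 * p ≤ k → k ≤ n → k % 2 = 1 → ¬ p ∣ k := by
    rintro k hk1 hk2 hk3 ⟨c, rfl⟩
    have hc1 : 2 ≤ c := by
      by_contra hc
      push_neg at hc
      have : p * c ≤ p * 1 := Nat.mul_le_mul_left p (by omega)
      omega
    have hc2 : c < 3 := by
      by_contra hc
      push_neg at hc
      have : p * 3 ≤ p * c := Nat.mul_le_mul_left p hc
      omega
    have : c = 2 := by omega
    subst this
    omega
  -- membership characterizations
  have hmemp : ∀ k, (p ∈ (Finset.Icc 1 k).filter (fun h => Nat.gcd h k = 1)) ↔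
      (p ≤ k ∧ ¬ p ∣ k) := by
    intro k
    simp only [Finset.mem_filter, Finset.mem_Icc]
    rw [show (Nat.gcd p k = 1) = (Nat.Coprime p k) from rfl, hp.coprime_iff_not_dvd]
    omega
  have hmem2p : ∀ k, (2 * p ∈ (Finset.Icc 1 k).filter (fun h => Nat.gcd h k = 1)) ↔
      (2 * p ≤ k ∧ k % 2 = 1 ∧ ¬ p ∣ k) := by
    intro k
    simp only [Finset.mem_filter, Finset.mem_Icc]
    rw [show (Nat.gcd (2 * p) k = 1) = (Nat.Coprime (2 * p) k) from rfl,
      Nat.coprime_mul_iff_left, Nat.prime_two.coprime_iff_not_dvd, hp.coprime_iff_not_dvd]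
    omega
  -- fareyProd terms nonzero
  have hne : ∀ k ∈ Finset.Icc 1 n, ∀ h ∈ (Finset.Icc 1 k).filter (fun h => Nat.gcd h k = 1),
      ((h : ℚ) / k) ≠ 0 := by
    intro k hk h hh
    simp only [Finset.mem_Icc] at hk
    simp only [Finset.mem_filter, Finset.mem_Icc] at hh
    apply div_ne_zero
    · exact_mod_cast (by omega : h ≠ 0)
    · exact_mod_cast (by omega : k ≠ 0)
  -- valuation of fareyProd as a double sum
  have key : padicValRat p (fareyProd n) =
      ∑ k ∈ Finset.Icc 1 n, ∑ h ∈ (Finset.Icc 1 k).filter (fun h => Nat.gcd h k = 1),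
        ((padicValNat p h : ℤ) - (padicValNat p k : ℤ)) := by
    rw [fareyProd, padicValRat_prod _ _
      (fun k hk => Finset.prod_ne_zero_iff.2 (hne k hk))]
    refine Finset.sum_congr rfl fun k hk => ?_
    rw [padicValRat_prod _ _ (hne k hk)]
    refine Finset.sum_congr rfl fun h hh => ?_
    simp only [Finset.mem_Icc] at hk
    simp only [Finset.mem_filter, Finset.mem_Icc] at hh
    rw [padicValRat.div (by exact_mod_cast (by omega : h ≠ 0))
      (by exact_mod_cast (by omega : k ≠ 0)), padicValRat.of_nat, padicValRat.of_nat]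
  -- rewrite inner sums
  have step : padicValRat p (fareyProd n) =
      ∑ k ∈ Finset.Icc 1 n,
        (((if p ∈ (Finset.Icc 1 k).filter (fun h => Nat.gcd h k = 1) then (1 : ℤ) else 0)
          + (if 2 * p ∈ (Finset.Icc 1 k).filter (fun h => Nat.gcd h k = 1) then (1 : ℤ) else 0))
          - ((if k = p then (((Finset.Icc 1 k).filter (fun h => Nat.gcd h k = 1)).card : ℤ) else 0)
            + (if k = 2 * p then (((Finset.Icc 1 k).filter (fun h => Nat.gcd h k = 1)).card : ℤ) else 0))) := by
    rw [key]
    refine Finset.sum_congr rfl fun k hk => ?_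
    simp only [Finset.mem_Icc] at hk
    rw [Finset.sum_sub_distrib]
    congr 1
    · have : ∀ h ∈ (Finset.Icc 1 k).filter (fun h => Nat.gcd h k = 1),
          (padicValNat p h : ℤ) = (if h = p then (1:ℤ) else 0) + (if h = 2*p then (1:ℤ) else 0) := by
        intro h hh
        simp only [Finset.mem_filter, Finset.mem_Icc] at hh
        exact hv h hh.1.1 (le_trans hh.1.2 hk.2)
      rw [Finset.sum_congr rfl this, Finset.sum_add_distrib,
        Finset.sum_ite_eq' _ p (fun _ => (1:ℤ)), Finset.sum_ite_eq' _ (2*p) (fun _ => (1:ℤ))]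
    · rw [Finset.sum_const, nsmul_eq_mul, hv k hk.1 hk.2, mul_add]
      congr 1 <;> split_ifs <;> simp
  -- evaluate the three pieces
  rw [Finset.sum_sub_distrib, Finset.sum_add_distrib, Finset.sum_add_distrib,
    Finset.sum_boole, Finset.sum_boole,
    Finset.sum_ite_eq' _ p (fun k => (((Finset.Icc 1 k).filter (fun h => Nat.gcd h k = 1)).card : ℤ)),
    Finset.sum_ite_eq' _ (2*p) (fun k => (((Finset.Icc 1 k).filter (fun h => Nat.gcd h k = 1)).card : ℤ))] at step
  have hpmem : p ∈ Finset.Icc 1 n := by simp only [Finset.mem_Icc]; omega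
  have h2pmem : 2 * p ∈ Finset.Icc 1 n := by simp only [Finset.mem_Icc]; omega
  rw [if_pos hpmem, if_pos h2pmem] at step
  -- card of F p and F (2p)
  have c3 : ((Finset.Icc 1 p).filter (fun h => Nat.gcd h p = 1)).card = p - 1 := by
    rw [cardF_eq_totient p hp.two_le, Nat.totient_prime hp]
  have c4 : ((Finset.Icc 1 (2*p)).filter (fun h => Nat.gcd h (2*p) = 1)).card = p - 1 := by
    rw [cardF_eq_totient (2*p) (by omega), Nat.totient_mul
      (Nat.prime_two.coprime_iff_not_dvd.2 (by omega)), Nat.totient_two, Nat.totient_prime hp, one_mul]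
  -- card of first counting set
  have c1 : ((Finset.Icc 1 n).filter (fun k =>
      p ∈ (Finset.Icc 1 k).filter (fun h => Nat.gcd h k = 1))).card = 2 * p - 2 := by
    have heq : ((Finset.Icc 1 n).filter (fun k =>
        p ∈ (Finset.Icc 1 k).filter (fun h => Nat.gcd h k = 1))) =
        (Finset.Icc p n).filter (fun k => ¬ p ∣ k) := by
      ext k
      rw [Finset.mem_filter, hmemp k]
      simp only [Finset.mem_Icc, Finset.mem_filter]
      constructor
      · rintro ⟨⟨h1, h2⟩, h3, h4⟩
        exact ⟨⟨h3, h2⟩, h4⟩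
      · rintro ⟨⟨h1, h2⟩, h3⟩
        exact ⟨⟨by omega, h2⟩, h1, h3⟩
    have hdvd : (Finset.Icc p n).filter (fun k => p ∣ k) = {p, 2 * p} := by
      ext k
      simp only [Finset.mem_filter, Finset.mem_Icc, Finset.mem_insert, Finset.mem_singleton]
      constructor
      · rintro ⟨⟨h1, h2⟩, hd⟩
        exact hmult k (by omega) h2 hd
      · rintro (rfl | rfl)
        · exact ⟨⟨le_refl _, by omega⟩, dvd_rfl⟩
        · exact ⟨⟨by omega, by omega⟩, ⟨2, by ring⟩⟩
    have htot := Finset.card_filter_add_card_filter_not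
      (s := Finset.Icc p n) (p := fun k => p ∣ k)
    rw [hdvd, heq] at *
    have hcard2 : ({p, 2 * p} : Finset ℕ).card = 2 := by
      rw [Finset.card_insert_of_notMem (by simp; omega), Finset.card_singleton]
    rw [hcard2, Nat.card_Icc] at htot
    omega
  -- card of second counting set
  have c2 : ((Finset.Icc 1 n).filter (fun k =>
      2 * p ∈ (Finset.Icc 1 k).filter (fun h => Nat.gcd h k = 1))).card = m := by
    have heq : ((Finset.Icc 1 n).filter (fun k =>
        2 * p ∈ (Finset.Icc 1 k).filter (fun h => Nat.gcd h k = 1))) =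
        (Finset.Icc (2*m+1) (3*m)).image (fun j => 2 * j + 1) := by
      ext k
      rw [Finset.mem_filter, hmem2p k]
      simp only [Finset.mem_Icc, Finset.mem_image]
      constructor
      · rintro ⟨⟨h1, h2⟩, h3, h4, h5⟩
        exact ⟨(k-1)/2, ⟨by omega, by omega⟩, by omega⟩
      · rintro ⟨j, ⟨hj1, hj2⟩, rfl⟩
        refine ⟨⟨by omega, by omega⟩, by omega, by omega, ?_⟩
        exact hnd _ (by omega) (by omega) (by omega)
    rw [heq, Finset.card_image_of_injective _ (fun a b hab => by omega), Nat.card_Icc]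
    omega
  rw [c1, c2, c3, c4] at step
  rw [recipFareyProd, padicValRat.inv, step]
  omega
end

section
/- For an odd prime p, ord_p(F̄_{p²−1}) = (p−1) − ∑_{k=1}^{p−1} μ(k)·⌊(p−1)/k⌋·b_k, where b_k = ⌊(p²−1)/k⌋ − p·⌊(p−1)/k⌋ and F̄_n is the reciprocal Farey product of order n. -/
open Finset ArithmeticFunction

-- prod valuation
lemma padicValRat_finset_prod {p : ℕ} [Fact p.Prime] {α : Type*} (s : Finset α) (f : α → ℚ)
    (hf : ∀ i ∈ s, f i ≠ 0) :
    padicValRat p (∏ i ∈ s, f i) = ∑ i ∈ s, padicValRat p (f i) := by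
  induction s using Finset.cons_induction with
  | empty => simp
  | cons a s ha ih =>
    rw [Finset.prod_cons, Finset.sum_cons,
      padicValRat.mul (hf a (Finset.mem_cons_self a s))
        (Finset.prod_ne_zero_iff.2 fun i hi => hf i (Finset.mem_cons_of_mem hi)),
      ih fun i hi => hf i (Finset.mem_cons_of_mem hi)]

-- valuation of small numbers
lemma padicValNat_small {p h : ℕ} (hp : p.Prime) (h0 : 0 < h) (hlt : h < p ^ 2) :
    (padicValNat p h : ℤ) = if p ∣ h then 1 else 0 := by
  haveI := Fact.mk hp
  split_ifs with hd
  · have h1 : 1 ≤ padicValNat p h := one_le_padicValNat_of_dvd h0.ne' hd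
    have h2 : ¬ (2 ≤ padicValNat p h) := by
      intro hc
      have : p ^ 2 ∣ h := dvd_trans (pow_dvd_pow p hc) (pow_padicValNat_dvd)
      exact absurd (Nat.le_of_dvd h0 this) (not_le.2 hlt)
    omega
  · simp [padicValNat.eq_zero_of_not_dvd hd]

lemma sum_divisors_moebius' (n : ℕ) :
    ∑ d ∈ n.divisors, (moebius d : ℤ) = if n = 1 then 1 else 0 := by
  have h : (moebius * (zeta : ArithmeticFunction ℕ) : ArithmeticFunction ℤ) n
      = (1 : ArithmeticFunction ℤ) n := by rw [moebius_mul_coe_zeta]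
  rwa [coe_mul_zeta_apply, one_apply] at h

lemma divisors_gcd_eq {h k : ℕ} (hk : k ≠ 0) :
    (Nat.gcd h k).divisors = k.divisors.filter (· ∣ h) := by
  ext d
  simp only [Nat.mem_divisors, Finset.mem_filter]
  constructor
  · rintro ⟨hd, hne⟩
    exact ⟨⟨hd.trans (Nat.gcd_dvd_right h k), hk⟩, hd.trans (Nat.gcd_dvd_left h k)⟩
  · rintro ⟨⟨hdk, -⟩, hdh⟩
    exact ⟨Nat.dvd_gcd hdh hdk, fun h0 => hk (Nat.eq_zero_of_gcd_eq_zero_right h0)⟩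

-- the hyperbola swap
lemma swap_divisors {M : Type*} [AddCommMonoid M] (n : ℕ) (G : ℕ → ℕ → M) :
    ∑ k ∈ Icc 1 n, ∑ d ∈ k.divisors, G d (k / d)
      = ∑ d ∈ Icc 1 n, ∑ m ∈ Icc 1 (n / d), G d m := by
  rw [Finset.sum_sigma', Finset.sum_sigma']
  refine Finset.sum_nbij' (fun x => ⟨x.2, x.1 / x.2⟩) (fun x => ⟨x.1 * x.2, x.1⟩) ?_ ?_ ?_ ?_ ?_
  · rintro ⟨k, d⟩ hx
    simp only [Finset.mem_sigma, Finset.mem_Icc, Nat.mem_divisors] at hx ⊢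
    obtain ⟨⟨h1k, hkn⟩, hdk, hk0⟩ := hx
    have hd0 : 0 < d := Nat.pos_of_dvd_of_pos hdk (by omega)
    refine ⟨⟨hd0, le_trans (Nat.le_of_dvd (by omega) hdk) hkn⟩,
      (Nat.one_le_div_iff hd0).2 (Nat.le_of_dvd (by omega) hdk), Nat.div_le_div_right hkn⟩
  · rintro ⟨d, m⟩ hx
    simp only [Finset.mem_sigma, Finset.mem_Icc, Nat.mem_divisors] at hx ⊢
    obtain ⟨⟨h1d, hdn⟩, h1m, hmn⟩ := hx
    have hd0 : 0 < d := h1d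
    have : d * m ≤ n := by
      have := (Nat.le_div_iff_mul_le hd0).1 hmn
      linarith [this]
    exact ⟨⟨Nat.one_le_iff_ne_zero.2 (by positivity), this⟩, Dvd.intro m rfl, by positivity⟩
  · rintro ⟨k, d⟩ hx
    simp only [Finset.mem_sigma, Finset.mem_Icc, Nat.mem_divisors] at hx
    obtain ⟨⟨h1k, hkn⟩, hdk, hk0⟩ := hx
    simp [Nat.mul_div_cancel' hdk]
  · rintro ⟨d, m⟩ hx
    simp only [Finset.mem_sigma, Finset.mem_Icc, Nat.mem_divisors] at hx
    obtain ⟨⟨h1d, hdn⟩, h1m, hmn⟩ := hx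
    simp [Nat.mul_div_cancel_left m (show 0 < d from h1d)]
  · rintro ⟨k, d⟩ hx
    simp only [Finset.mem_sigma, Finset.mem_Icc, Nat.mem_divisors] at hx
    rfl

lemma sum_f_eval (p : ℕ) (hp : 0 < p) (M : ℕ) :
    ∑ m ∈ Icc 1 M, (((m / p : ℕ) : ℤ) - (m : ℤ) * (if p ∣ m then 1 else 0))
      = ((M / p : ℕ) : ℤ) * (M + 1) - p * ((M / p : ℕ) : ℤ) * ((M / p : ℕ) + 1) := by
  induction M with
  | zero => simp
  | succ M ih =>
    rw [Finset.sum_Icc_succ_top (by omega), ih, Nat.succ_div]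
    by_cases hd : p ∣ M + 1
    · have h2 : p * (M / p + 1) = M + 1 := by
        conv_rhs => rw [← Nat.mul_div_cancel' hd]
        rw [Nat.succ_div, if_pos hd]
      rw [if_pos hd, if_pos hd]
      generalize hq : M / p = q at h2 ⊢
      have h3 : (p : ℤ) * ((q : ℤ) + 1) = (M : ℤ) + 1 := by exact_mod_cast h2
      push_cast
      linear_combination 2 * h3
    · rw [if_neg hd, if_neg hd]
      generalize hq : M / p = q
      push_cast
      ring

lemma floor_fact (p d : ℕ) (hp : 2 ≤ p) (hd : 0 < d) :
    (p ^ 2 - 1) / d / p = (p - 1) / d := by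
  rw [Nat.div_div_eq_div_mul]
  have hmod := Nat.div_add_mod (p - 1) d
  have hmlt : (p - 1) % d < d := Nat.mod_lt _ hd
  have key : p ≤ ((p - 1) / d + 1) * d := by
    have expand : ((p - 1) / d + 1) * d = d * ((p - 1) / d) + d := by ring
    omega
  have hpp : p * p = p ^ 2 := by ring
  have h1 : (p - 1) * p < p * p := by
    apply Nat.mul_lt_mul_of_lt_of_le (by omega) (le_refl p) (by omega)
  apply Nat.div_eq_of_lt_le
  · have step1 : (p - 1) / d * (d * p) = ((p - 1) / d * d) * p := by ring
    have step2 : ((p - 1) / d * d) * p ≤ (p - 1) * p :=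
      Nat.mul_le_mul_right p (Nat.div_mul_le_self _ _)
    omega
  · have step3 : p * p ≤ (((p - 1) / d + 1) * d) * p := Nat.mul_le_mul_right p key
    have step4 : (((p - 1) / d + 1) * d) * p = ((p - 1) / d + 1) * (d * p) := by ring
    omega



lemma sum_multiples {M : Type*} [AddCommMonoid M] (d K : ℕ) (hd : 0 < d) (F : ℕ → M) :
    ∑ h ∈ (Icc 1 K).filter (fun h => d ∣ h), F h = ∑ a ∈ Icc 1 (K / d), F (d * a) := by
  refine Finset.sum_nbij' (fun h => h / d) (fun a => d * a) ?_ ?_ ?_ ?_ ?_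
  · intro h hh
    simp only [Finset.mem_filter, Finset.mem_Icc] at hh ⊢
    obtain ⟨⟨h1, h2⟩, hdvd⟩ := hh
    exact ⟨(Nat.one_le_div_iff hd).2 (Nat.le_of_dvd (by omega) hdvd), Nat.div_le_div_right h2⟩
  · intro a ha
    simp only [Finset.mem_filter, Finset.mem_Icc] at ha ⊢
    obtain ⟨h1, h2⟩ := ha
    refine ⟨⟨Nat.one_le_iff_ne_zero.2 (by positivity), ?_⟩, Dvd.intro a rfl⟩
    calc d * a ≤ d * (K / d) := Nat.mul_le_mul_left d h2
      _ ≤ K := Nat.mul_div_le K d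
  · intro h hh
    simp only [Finset.mem_filter, Finset.mem_Icc] at hh
    exact Nat.mul_div_cancel' hh.2
  · intro a ha
    exact Nat.mul_div_cancel_left a hd
  · intro h hh
    simp only [Finset.mem_filter, Finset.mem_Icc] at hh
    rw [Nat.mul_div_cancel' hh.2]

lemma inner_moebius (k : ℕ) (hk : 0 < k) (g : ℕ → ℤ) :
    ∑ h ∈ (Icc 1 k).filter (fun h => Nat.gcd h k = 1), g h
      = ∑ d ∈ k.divisors, (moebius d : ℤ) * ∑ a ∈ Icc 1 (k / d), g (d * a) := by
  rw [Finset.sum_filter]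
  have step1 : ∀ h ∈ Icc 1 k,
      (if Nat.gcd h k = 1 then g h else 0)
        = ∑ d ∈ k.divisors, (if d ∣ h then (moebius d : ℤ) * g h else 0) := by
    intro h _
    have e1 : (if Nat.gcd h k = 1 then g h else 0)
        = (∑ d ∈ (Nat.gcd h k).divisors, (moebius d : ℤ)) * g h := by
      rw [sum_divisors_moebius']
      split_ifs <;> simp
    rw [e1, divisors_gcd_eq hk.ne', Finset.sum_filter, Finset.sum_mul]
    congr 1
    ext d
    split_ifs <;> simp
  rw [Finset.sum_congr rfl step1, Finset.sum_comm]
  refine Finset.sum_congr rfl fun d hd => ?_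
  have hd0 : 0 < d := Nat.pos_of_mem_divisors hd
  rw [← Finset.sum_filter, Finset.mul_sum]
  exact sum_multiples d k hd0 (fun h => (moebius d : ℤ) * g h)

lemma count_multiples (p b : ℕ) :
    ∑ a ∈ Icc 1 b, (if p ∣ a then (1 : ℤ) else 0) = ((b / p : ℕ) : ℤ) := by
  rw [Finset.sum_boole]
  norm_cast
  have hIcc : Icc 1 b = Ioc 0 b := by ext x; simp [Nat.lt_iff_add_one_le]
  rw [hIcc]
  exact Nat.Ioc_filter_dvd_card_eq_div b p

lemma classic_moebius_sum (N : ℕ) (hN : 1 ≤ N) :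
    ∑ d ∈ Icc 1 N, (moebius d : ℤ) * ((N / d : ℕ) : ℤ) = 1 := by
  have h := (swap_divisors (M := ℤ) N (fun d _ => (moebius d : ℤ))).symm
  have l : ∑ k ∈ Icc 1 N, ∑ d ∈ k.divisors, (moebius d : ℤ) = 1 := by
    rw [Finset.sum_congr rfl fun k _ => sum_divisors_moebius' k]
    rw [Finset.sum_ite_eq' (Icc 1 N) 1 (fun _ => (1 : ℤ))]
    simp [hN]
  rw [l] at h
  rw [← h]
  refine Finset.sum_congr rfl fun d hd => ?_
  rw [Finset.sum_const, Nat.card_Icc]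
  simp [mul_comm, nsmul_eq_mul]

lemma combo (p : ℕ) (hp : p.Prime) :
    ∑ k ∈ Icc 1 (p ^ 2 - 1), ∑ h ∈ (Icc 1 k).filter (fun h => Nat.gcd h k = 1),
        ((if p ∣ h then (1 : ℤ) else 0) - (if p ∣ k then 1 else 0))
      = (∑ k ∈ Icc 1 (p - 1), (moebius k : ℤ) * ((p - 1) / k : ℕ) *
          (((p ^ 2 - 1) / k : ℕ) - (p : ℤ) * ((p - 1) / k : ℕ))) - ((p : ℤ) - 1) := by
  have hp2 : 2 ≤ p := hp.two_le
  have hpsq : p ≤ p ^ 2 := Nat.le_self_pow two_ne_zero p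
  have hn1 : 1 ≤ p ^ 2 - 1 := by omega
  have step2 : ∀ k ∈ Icc 1 (p ^ 2 - 1),
      ∑ h ∈ (Icc 1 k).filter (fun h => Nat.gcd h k = 1),
        ((if p ∣ h then (1 : ℤ) else 0) - (if p ∣ k then 1 else 0))
      = ∑ d ∈ k.divisors, (fun d m => (moebius d : ℤ) *
          ∑ a ∈ Icc 1 m, ((if p ∣ d * a then (1 : ℤ) else 0)
            - (if p ∣ d * m then 1 else 0))) d (k / d) := by
    intro k hk
    rw [Finset.mem_Icc] at hk
    rw [inner_moebius k (by omega)]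
    refine Finset.sum_congr rfl fun d hd => ?_
    have hdk : d ∣ k := (Nat.mem_divisors.1 hd).1
    simp only
    congr 1
    refine Finset.sum_congr rfl fun a _ => ?_
    rw [Nat.mul_div_cancel' hdk]
  rw [Finset.sum_congr rfl step2, swap_divisors (p ^ 2 - 1)
    (fun d m => (moebius d : ℤ) * ∑ a ∈ Icc 1 m,
      ((if p ∣ d * a then (1 : ℤ) else 0) - (if p ∣ d * m then 1 else 0)))]
  have hT : ∀ d ∈ Icc 1 (p ^ 2 - 1),
      ∑ m ∈ Icc 1 ((p ^ 2 - 1) / d), (moebius d : ℤ) *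
          ∑ a ∈ Icc 1 m, ((if p ∣ d * a then (1 : ℤ) else 0) - (if p ∣ d * m then 1 else 0))
      = (moebius d : ℤ) * ((p - 1) / d : ℕ) *
          ((((p ^ 2 - 1) / d : ℕ) : ℤ) - (p : ℤ) * ((p - 1) / d : ℕ))
        - ((p : ℤ) - 1) * ((moebius d : ℤ) * ((p - 1) / d : ℕ)) := by
    intro d hd
    rw [Finset.mem_Icc] at hd
    by_cases hpd : p ∣ d
    · have hq0 : (p - 1) / d = 0 := Nat.div_eq_of_lt (by
        have := Nat.le_of_dvd (by omega) hpd; omega)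
      have hz : ∀ m ∈ Icc 1 ((p ^ 2 - 1) / d), (moebius d : ℤ) *
          ∑ a ∈ Icc 1 m, ((if p ∣ d * a then (1 : ℤ) else 0)
            - (if p ∣ d * m then 1 else 0)) = 0 := by
        intro m _
        have h1 : ∀ a : ℕ, p ∣ d * a := fun a => Dvd.dvd.mul_right hpd a
        simp [h1]
      rw [Finset.sum_congr rfl hz, Finset.sum_const_zero, hq0]
      simp
    · have hiff : ∀ x : ℕ, p ∣ d * x ↔ p ∣ x := fun x =>
        ⟨fun h => ((Nat.Prime.dvd_mul hp).1 h).resolve_left hpd, fun h => h.mul_left d⟩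
      have inner_eq : ∀ m ∈ Icc 1 ((p ^ 2 - 1) / d), (moebius d : ℤ) *
          ∑ a ∈ Icc 1 m, ((if p ∣ d * a then (1 : ℤ) else 0) - (if p ∣ d * m then 1 else 0))
          = (moebius d : ℤ) * (((m / p : ℕ) : ℤ) - (m : ℤ) * (if p ∣ m then 1 else 0)) := by
        intro m hm
        congr 1
        rw [Finset.sum_sub_distrib]
        have e1 : ∑ a ∈ Icc 1 m, (if p ∣ d * a then (1 : ℤ) else 0) = ((m / p : ℕ) : ℤ) := by
          rw [Finset.sum_congr rfl fun a _ => if_congr (hiff a) rfl rfl]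
          exact count_multiples p m
        have e2 : ∑ _a ∈ Icc 1 m, (if p ∣ d * m then (1 : ℤ) else 0)
            = (m : ℤ) * (if p ∣ m then 1 else 0) := by
          rw [Finset.sum_const, Nat.card_Icc, if_congr (hiff m) rfl rfl]
          simp [nsmul_eq_mul]
        rw [e1, e2]
      rw [Finset.sum_congr rfl inner_eq, ← Finset.mul_sum, sum_f_eval p (by omega) ((p ^ 2 - 1) / d),
        floor_fact p d hp2 (by omega)]
      ring
  rw [Finset.sum_congr rfl hT, Finset.sum_sub_distrib]
  have hsub : Icc 1 (p - 1) ⊆ Icc 1 (p ^ 2 - 1) := Finset.Icc_subset_Icc_right (by omega)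
  have t1 : ∑ d ∈ Icc 1 (p - 1), (moebius d : ℤ) * ((p - 1) / d : ℕ) *
        ((((p ^ 2 - 1) / d : ℕ) : ℤ) - (p : ℤ) * ((p - 1) / d : ℕ))
      = ∑ d ∈ Icc 1 (p ^ 2 - 1), (moebius d : ℤ) * ((p - 1) / d : ℕ) *
        ((((p ^ 2 - 1) / d : ℕ) : ℤ) - (p : ℤ) * ((p - 1) / d : ℕ)) := by
    apply Finset.sum_subset hsub
    intro x hx hnx
    rw [Finset.mem_Icc] at hx hnx
    have hq0 : (p - 1) / x = 0 := Nat.div_eq_of_lt (by omega)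
    rw [hq0]
    simp
  have t2 : ∑ d ∈ Icc 1 (p ^ 2 - 1), ((p : ℤ) - 1) * ((moebius d : ℤ) * ((p - 1) / d : ℕ))
      = ((p : ℤ) - 1) := by
    rw [← Finset.mul_sum]
    have t3 : ∑ d ∈ Icc 1 (p ^ 2 - 1), (moebius d : ℤ) * ((p - 1) / d : ℕ)
        = ∑ d ∈ Icc 1 (p - 1), (moebius d : ℤ) * ((p - 1) / d : ℕ) := by
      symm
      apply Finset.sum_subset hsub
      intro x hx hnx
      rw [Finset.mem_Icc] at hx hnx
      have hq0 : (p - 1) / x = 0 := Nat.div_eq_of_lt (by omega)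
      rw [hq0]
      simp
    rw [t3, classic_moebius_sum (p - 1) (by omega), mul_one]
  rw [← t1, t2]

lemma val_fareyProd (p n : ℕ) (hp : p.Prime) (hn : n < p ^ 2) :
    padicValRat p (fareyProd n)
      = ∑ k ∈ Icc 1 n, ∑ h ∈ (Icc 1 k).filter (fun h => Nat.gcd h k = 1),
          ((if p ∣ h then (1 : ℤ) else 0) - (if p ∣ k then 1 else 0)) := by
  haveI := Fact.mk hp
  unfold fareyProd
  rw [padicValRat_finset_prod]
  · refine Finset.sum_congr rfl fun k hk => ?_
    rw [Finset.mem_Icc] at hk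
    have hk0 : (0 : ℚ) < (k : ℚ) := by exact_mod_cast (by omega : 0 < k)
    rw [padicValRat_finset_prod]
    · refine Finset.sum_congr rfl fun h hh => ?_
      rw [Finset.mem_filter, Finset.mem_Icc] at hh
      have hh0 : (0 : ℚ) < (h : ℚ) := by exact_mod_cast (by omega : 0 < h)
      rw [padicValRat.div (by exact_mod_cast hh0.ne') (by exact_mod_cast hk0.ne'),
        padicValRat.of_nat, padicValRat.of_nat,
        padicValNat_small hp (by omega) (by omega),
        padicValNat_small hp (by omega) (by omega)]
    · intro h hh
      rw [Finset.mem_filter, Finset.mem_Icc] at hh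
      have hh0 : (0 : ℚ) < (h : ℚ) := by exact_mod_cast (by omega : 0 < h)
      exact div_ne_zero hh0.ne' hk0.ne'
  · intro k hk
    rw [Finset.mem_Icc] at hk
    have hk0 : (0 : ℚ) < (k : ℚ) := by exact_mod_cast (by omega : 0 < k)
    rw [Finset.prod_ne_zero_iff]
    intro h hh
    rw [Finset.mem_filter, Finset.mem_Icc] at hh
    have hh0 : (0 : ℚ) < (h : ℚ) := by exact_mod_cast (by omega : 0 < h)
    exact div_ne_zero hh0.ne' hk0.ne'

open ArithmeticFunction in
theorem ord_recipFareyProd_p_sq_sub_one (p : ℕ) (hp : p.Prime) (hodd : Odd p) :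
    padicValRat p (recipFareyProd (p ^ 2 - 1)) =
      ((p : ℤ) - 1) - ∑ k ∈ Finset.Icc 1 (p - 1),
        (moebius k : ℤ) * ((p - 1) / k : ℕ) *
          (((p ^ 2 - 1) / k : ℕ) - (p : ℤ) * ((p - 1) / k : ℕ)) := by
  haveI := Fact.mk hp
  have hp2 : 2 ≤ p := hp.two_le
  have hpsq : p ≤ p ^ 2 := Nat.le_self_pow two_ne_zero p
  rw [recipFareyProd, padicValRat.inv,
    val_fareyProd p (p ^ 2 - 1) hp (by omega), combo p hp]
  ring
end
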